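/- arXiv:1410.0559 — 2 statements merged into one kernel-verified Lean document; each statement's English description precedes it below -/
import Mathlib

section
/- Let X be a subspace of 2^ω such that h_q[X] = X for every eventually constant q ∈ 2^ω (where h_q(x) = x + q mod 2). Then X is a homogeneous topological space: for every pair x, y ∈ X there is a homeomorphism of X onto itself mapping x to y. -/
/-!
Given `x, y ∈ X`, let `φ` translate `w` by `x + y` on the coordinates up to and including the
first one where `w` differs from `x` (on all coordinates if `w = x`, so that `φ x = y`).
For `w ≠ x` this is a translation by an eventually zero sequence, so `φ` maps `X` into `X`;
the same construction with `x` and `y` exchanged inverts it, and each coordinate of `φ w`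
depends on finitely many coordinates of `w`, so `φ` is a homeomorphism of `X` taking `x` to `y`.
-/

def prefixTranslate (x y w : ℕ → Bool) : ℕ → Bool := fun k =>
  if ∀ j < k, w j = x j then xor (w k) (xor (x k) (y k)) else w k

section

variable (x y : ℕ → Bool)

theorem prefixTranslate_self : prefixTranslate x y x = y := by
  funext k
  simp [prefixTranslate]

theorem prefixTranslate_agree_below_iff (w : ℕ → Bool) (k : ℕ) :
    (∀ j < k, prefixTranslate x y w j = y j) ↔ ∀ j < k, w j = x j := by
  have step : ∀ j, (∀ i < j, w i = x i) → (prefixTranslate x y w j = y j ↔ w j = x j) := by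
    intro j hj
    simp only [prefixTranslate, if_pos hj]
    cases w j <;> cases x j <;> cases y j <;> decide
  constructor
  · intro h j
    induction j using Nat.strong_induction_on with
    | _ j ih => exact fun hjk => (step j fun i hij => ih i hij (hij.trans hjk)).1 (h j hjk)
  · exact fun h j hjk => (step j fun i hij => h i (hij.trans hjk)).2 (h j hjk)

theorem prefixTranslate_prefixTranslate (w : ℕ → Bool) :
    prefixTranslate y x (prefixTranslate x y w) = w := by
  funext k
  have hiff := prefixTranslate_agree_below_iff x y w k
  unfold prefixTranslate at hiff ⊢
  by_cases hk : ∀ j < k, w j = x j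
  · rw [if_pos (hiff.2 hk), if_pos hk]
    cases w k <;> cases x k <;> cases y k <;> rfl
  · rw [if_neg (mt hiff.1 hk), if_neg hk]

theorem isClopen_setOf_agree_below {α : Type*} [TopologicalSpace α] [DiscreteTopology α]
    (z : ℕ → α) (k : ℕ) : IsClopen {w : ℕ → α | ∀ j < k, w j = z j} := by
  have : {w : ℕ → α | ∀ j < k, w j = z j} = ⋂ j ∈ Finset.range k, (fun w => w j) ⁻¹' {z j} := by
    ext w
    simp
  rw [this]
  exact isClopen_biInter_finset fun j _ => (isClopen_discrete _).preimage (continuous_apply j)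

theorem continuous_prefixTranslate : Continuous (prefixTranslate x y) := by
  refine continuous_pi fun k => Continuous.if ?_ (by fun_prop) (by fun_prop)
  simp [(isClopen_setOf_agree_below x k).frontier_eq]

def prefixTranslateHomeomorph : (ℕ → Bool) ≃ₜ (ℕ → Bool) where
  toFun := prefixTranslate x y
  invFun := prefixTranslate y x
  left_inv := prefixTranslate_prefixTranslate x y
  right_inv := prefixTranslate_prefixTranslate y x
  continuous_toFun := continuous_prefixTranslate x y
  continuous_invFun := continuous_prefixTranslate y x

theorem prefixTranslate_mem {X : Set (ℕ → Bool)}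
    (hX : ∀ q : ℕ → Bool, (∃ m, ∀ n ≥ m, q n = q m) → ∀ w ∈ X, (fun n => xor (w n) (q n)) ∈ X)
    (hy : y ∈ X) {w : ℕ → Bool} (hw : w ∈ X) : prefixTranslate x y w ∈ X := by
  by_cases hwx : w = x
  · rw [hwx, prefixTranslate_self]
    exact hy
  obtain ⟨n, hn⟩ := Function.ne_iff.mp hwx
  set q : ℕ → Bool := fun k => if ∀ j < k, w j = x j then xor (x k) (y k) else false
  have hq : ∀ k > n, q k = false := fun k hk => if_neg fun h => hn (h n hk)
  have htranslate : prefixTranslate x y w = fun k => xor (w k) (q k) := by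
    funext k
    by_cases hk : ∀ j < k, w j = x j
    · simp only [prefixTranslate, q, if_pos hk]
    · simp only [prefixTranslate, q, if_neg hk, Bool.xor_false]
  rw [htranslate]
  exact hX q ⟨n + 1, fun k hk => by rw [hq k (by omega), hq (n + 1) (by omega)]⟩ w hw

end

/-- If `X ⊆ 2^ω` satisfies `h_q[X] = X` for every eventually constant `q`
(where `h_q(x) = x + q` mod 2), then `X` is homogeneous: for every pair of points
`x, y ∈ X` there is a homeomorphism of `X` onto itself mapping `x` to `y`. -/
theorem invariant_under_Q_translations_implies_homogeneous
    (X : Set (ℕ → Bool))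
    (hinv : ∀ q ∈ {x : ℕ → Bool | ∃ m : ℕ, ∀ n ≥ m, x n = x m},
      (fun x : ℕ → Bool => fun n => xor (x n) (q n)) '' X = X) :
    ∀ x y : X, ∃ h : X ≃ₜ X, h x = y := by
  have hX : ∀ q : ℕ → Bool, (∃ m, ∀ n ≥ m, q n = q m) → ∀ w ∈ X,
      (fun n => xor (w n) (q n)) ∈ X :=
    fun q hq w hw => hinv q hq ▸ Set.mem_image_of_mem _ hw
  rintro ⟨x, hx⟩ ⟨y, hy⟩
  refine ⟨(prefixTranslateHomeomorph x y).subtype fun w => ⟨prefixTranslate_mem x y hX hy, ?_⟩,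
    Subtype.ext (prefixTranslate_self x y)⟩
  intro hw
  rw [← prefixTranslate_prefixTranslate x y w]
  exact prefixTranslate_mem y x hX hx hw
end

section
/- Let V be the countable group of translations of 2^ω by eventually constant sequences. There exists a countable dense subset D of 2^ω such that D ∩ Q = ∅ and h[D] ∩ D = ∅ for every h ∈ V other than the identity. -/
/-!
Take for `D` the points `codedPoint L`: the finite word `L` followed by the sequence
`n ↦ bit k of n`, where `k` is the code of `L`. They meet every cylinder, so `D` is dense.
Bit `k` of `n` is `0` and `1` for arbitrarily large `n`, so no point of `D` is eventually constant.
If `codedPoint L + q = codedPoint M` with `q` eventually constant, then `L ≠ M` (as `q ≠ 0`), and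
eventually `q n = bit k of n xor bit j of n` with `k ≠ j` the codes of `L` and `M`; but this
too takes both values for arbitrarily large `n`.
-/

open Filter

theorem Filter.not_eventuallyConst_of_frequently_ne {α β : Type*} {l : Filter α} {f : α → β}
    [Nonempty β] (h : ∀ c, ∃ᶠ x in l, f x ≠ c) : ¬ EventuallyConst f l := fun hf ↦
  let ⟨c, hc⟩ := hf.eventuallyEq_const
  let ⟨_, hne, heq⟩ := ((h c).and_eventually hc).exists
  hne heq

theorem Nat.frequently_atTop_testBit_eq_and_testBit_eq_false {k j : ℕ} (hkj : k ≠ j)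
    (b : Bool) : ∃ᶠ n : ℕ in atTop, n.testBit k = b ∧ n.testBit j = false := by
  refine frequently_atTop.2 fun a ↦ ⟨2 ^ (a + k + j + 1) + cond b (2 ^ k) 0, ?_, ?_⟩
  · have := (a + k + j + 1).lt_two_pow_self
    omega
  · rw [testBit_two_pow_add_gt (by omega), testBit_two_pow_add_gt (by omega)]
    cases b <;> simp [testBit_two_pow_of_ne hkj]

theorem Nat.not_eventuallyConst_atTop_testBit (k : ℕ) :
    ¬ EventuallyConst (fun n : ℕ ↦ n.testBit k) atTop :=
  not_eventuallyConst_of_frequently_ne fun c ↦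
    (frequently_atTop_testBit_eq_and_testBit_eq_false k.succ_ne_self.symm !c).mono
      fun _ h ↦ by simp [h.1]

theorem Nat.not_eventuallyConst_atTop_xor_testBit {k j : ℕ} (hkj : k ≠ j) :
    ¬ EventuallyConst (fun n : ℕ ↦ n.testBit k ^^ n.testBit j) atTop :=
  not_eventuallyConst_of_frequently_ne fun c ↦
    (frequently_atTop_testBit_eq_and_testBit_eq_false hkj !c).mono fun _ h ↦ by simp [h.1, h.2]

theorem PiNat.dense_of_forall_exists_mem_cylinder {E : ℕ → Type*}
    [∀ n, TopologicalSpace (E n)] [∀ n, DiscreteTopology (E n)] {D : Set (∀ n, E n)}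
    (h : ∀ x n, ∃ y ∈ D, y ∈ cylinder x n) : Dense D := by
  refine (isTopologicalBasis_cylinders E).dense_iff.2 ?_
  rintro _ ⟨x, n, rfl⟩ -
  obtain ⟨y, hyD, hy⟩ := h x n
  exact ⟨y, hy, hyD⟩

def prefixedTestBit (L : List Bool) (k : ℕ) (n : ℕ) : Bool :=
  L.getD n (n.testBit k)

theorem prefixedTestBit_of_lt {L : List Bool} (k : ℕ) {n : ℕ} (h : n < L.length) :
    prefixedTestBit L k n = L[n] :=
  L.getD_eq_getElem _ h

theorem prefixedTestBit_eventuallyEq (L : List Bool) (k : ℕ) :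
    prefixedTestBit L k =ᶠ[atTop] fun n ↦ n.testBit k :=
  eventually_atTop.2 ⟨L.length, fun _ hn ↦ L.getD_eq_default _ hn⟩

def codedPoint (L : List Bool) : ℕ → Bool :=
  prefixedTestBit L (Encodable.encode L)

theorem dense_range_codedPoint : Dense (Set.range codedPoint) :=
  PiNat.dense_of_forall_exists_mem_cylinder fun x n ↦
    ⟨codedPoint (List.ofFn fun i : Fin n ↦ x i), ⟨_, rfl⟩, fun i hi ↦ by
      rw [codedPoint, prefixedTestBit_of_lt _ (by simpa using hi), List.getElem_ofFn]⟩

theorem not_eventuallyConst_codedPoint (L : List Bool) :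
    ¬ EventuallyConst (codedPoint L) atTop :=
  fun h ↦ Nat.not_eventuallyConst_atTop_testBit _ (h.congr (prefixedTestBit_eventuallyEq _ _))

theorem not_eventuallyConst_xor_codedPoint {L M : List Bool} (h : L ≠ M) :
    ¬ EventuallyConst (fun n ↦ xor (codedPoint L n) (codedPoint M n)) atTop := fun hc ↦
  Nat.not_eventuallyConst_atTop_xor_testBit (Encodable.encode_injective.ne h) <| hc.congr <|
    (prefixedTestBit_eventuallyEq L (Encodable.encode L)).mp <|
      (prefixedTestBit_eventuallyEq M (Encodable.encode M)).mono
        fun _ hM hL ↦ by simp only [codedPoint, hL, hM]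

/-- There exists a countable dense subset `D` of `2^ω` disjoint from the set `Q` of
eventually constant sequences such that `h_q[D] ∩ D = ∅` for every translation `h_q`
(`q ∈ Q`, `h_q(x) = x + q` mod 2) other than the identity, i.e. for every nonzero `q ∈ Q`. -/
theorem exists_dense_set_disjoint_from_its_Q_translates :
    ∃ D : Set (ℕ → Bool), D.Countable ∧ Dense D ∧
      D ∩ {x : ℕ → Bool | ∃ m : ℕ, ∀ n ≥ m, x n = x m} = ∅ ∧
      ∀ q ∈ {x : ℕ → Bool | ∃ m : ℕ, ∀ n ≥ m, x n = x m},
        q ≠ (fun _ => false) →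
        ((fun x : ℕ → Bool => fun n => xor (x n) (q n)) '' D) ∩ D = ∅ := by
  refine ⟨Set.range codedPoint, Set.countable_range _, dense_range_codedPoint, ?_, ?_⟩
  · refine Set.eq_empty_of_forall_notMem ?_
    rintro _ ⟨⟨L, rfl⟩, hL⟩
    exact not_eventuallyConst_codedPoint L (eventuallyConst_atTop.2 hL)
  · intro q hq hq0
    refine Set.eq_empty_of_forall_notMem ?_
    rintro _ ⟨⟨_, ⟨L, rfl⟩, rfl⟩, M, hM⟩
    have hq_eq : q = fun n ↦ xor (codedPoint L n) (codedPoint M n) := by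
      funext n
      simp [hM]
    obtain rfl | hLM := eq_or_ne L M
    · exact hq0 (by simpa using hq_eq)
    · exact not_eventuallyConst_xor_codedPoint hLM (hq_eq ▸ eventuallyConst_atTop.2 hq)
end
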